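/- arXiv:1801.05966 — 3 statements merged into one kernel-verified Lean document; each statement's English description precedes it below -/
import Mathlib

section
/- Let * be a continuous t-norm. Define φ, ξ : [0,∞] → [0,1] by φ(t) = t for 0 ≤ t ≤ 1 and φ(t) = 1 for t > 1 (including t = ∞), and ξ(t) = 0 for t ≤ 1 and ξ(t) = 1 for t > 1. Then φ and ξ are distance distributions with ξ ≤ φ, but there exists no distance distribution ψ with φ ⊗ ψ = ξ. In particular, the quantale (Δ, ⊗, κ_{0,1}) of distance distributions is not divisible. -/
open unitInterval
open scoped ENNReal

noncomputable section

instance : Fact ((0:ℝ) ≤ 1) := ⟨zero_le_one⟩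

/-- A distance distribution: a map `φ : [0,∞] → [0,1]` with `φ t = ⨆ s < t, φ s`. -/
def DistDistr (φ : ℝ≥0∞ → I) : Prop :=
  ∀ t, φ t = ⨆ (s : ℝ≥0∞) (_ : s < t), φ s

/-- The one-step function `κ_{p,a}`. -/
def kappa (p : ℝ≥0∞) (a : I) : ℝ≥0∞ → I :=
  fun t => if t ≤ p then 0 else a

/-- A continuous t-norm on `[0,1]`. -/
structure ContinuousTNorm where
  mul : I → I → I
  continuous' : Continuous fun p : I × I => mul p.1 p.2
  comm : ∀ a b, mul a b = mul b a
  assoc : ∀ a b c, mul (mul a b) c = mul a (mul b c)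
  mono : ∀ a, Monotone (mul a)
  mul_one : ∀ a, mul a 1 = a

/-- The residual `a →* b` of a continuous t-norm. -/
def ContinuousTNorm.residual (T : ContinuousTNorm) (a b : I) : I :=
  sSup {c | T.mul a c ≤ b}

/-- Convolution of maps `[0,∞] → [0,1]` w.r.t. a continuous t-norm. -/
def conv (T : ContinuousTNorm) (φ ψ : ℝ≥0∞ → I) : ℝ≥0∞ → I :=
  fun t => ⨆ (r : ℝ≥0∞) (s : ℝ≥0∞) (_ : r + s = t), T.mul (φ r) (ψ s)

/-- `φ⁻ t = ⨆ s < t, φ s`. -/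
def lower (φ : ℝ≥0∞ → I) : ℝ≥0∞ → I :=
  fun t => ⨆ (s : ℝ≥0∞) (_ : s < t), φ s

/-!
Write `φ ⊗ ψ = ξ`. Since `ξ = 1` just to the right of `1`, the convolution at `5/4` forces,
for every `c < 1`, a decomposition `r + s = 5/4` with `φ r > c` and `ψ s > c`; as `φ r = r` for
`r ≤ 1`, taking `c ≥ 3/4` gives `r > 3/4`, hence `s < 1/2`, and so `ψ (1/2) = 1`.
But then `ξ 1 ≥ φ (1/2) * ψ (1/2) = 1/2`, while `ξ 1 = 0`.
-/

namespace ContinuousTNorm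

variable (T : ContinuousTNorm)

lemma mul_le_left (a b : I) : T.mul a b ≤ a :=
  (T.mono a le_one').trans_eq (T.mul_one a)

lemma mul_le_right (a b : I) : T.mul a b ≤ b :=
  T.comm a b ▸ T.mul_le_left b a

end ContinuousTNorm

section DistDistr

variable {φ : ℝ≥0∞ → I}

lemma DistDistr.monotone (h : DistDistr φ) : Monotone φ := by
  intro a b hab
  rw [h a, h b]
  exact iSup₂_mono' fun s hs => ⟨s, hs.trans_le hab, le_rfl⟩

lemma distDistr_of_monotone (hmono : Monotone φ)
    (happrox : ∀ t, ∀ c < φ t, ∃ s < t, c < φ s) : DistDistr φ := by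
  intro t
  refine le_antisymm (le_of_forall_lt fun c hc => ?_) (iSup₂_le fun s hs => hmono hs.le)
  obtain ⟨s, hst, hcs⟩ := happrox t c hc
  exact hcs.trans_le (le_iSup₂_of_le s hst le_rfl)

lemma exists_lt_of_eq_one_of_one_lt (hφ : ∀ t, 1 < t → φ t = 1) {t : ℝ≥0∞} (ht : 1 < t)
    {c : I} (hc : c < φ t) : ∃ s < t, c < φ s := by
  obtain ⟨s, hs1, hst⟩ := exists_between ht
  exact ⟨s, hst, by rwa [hφ s hs1, ← hφ t ht]⟩

end DistDistr

section Conv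

variable (T : ContinuousTNorm) (φ ψ : ℝ≥0∞ → I)

lemma mul_le_conv (r s : ℝ≥0∞) : T.mul (φ r) (ψ s) ≤ conv T φ ψ (r + s) :=
  le_iSup₂_of_le r s (le_iSup_of_le rfl le_rfl)

variable {T φ ψ}

lemma exists_lt_of_lt_conv {t : ℝ≥0∞} {c : I} (h : c < conv T φ ψ t) :
    ∃ r s, r + s = t ∧ c < φ r ∧ c < ψ s := by
  simp only [conv, lt_iSup_iff] at h
  obtain ⟨r, s, hrs, hc⟩ := h
  exact ⟨r, s, hrs, hc.trans_le (T.mul_le_left _ _), hc.trans_le (T.mul_le_right _ _)⟩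

end Conv

section RampAndStep

variable {φ ξ : ℝ≥0∞ → I}

lemma distDistr_ramp (hφ1 : ∀ t : ℝ≥0∞, t ≤ 1 → (φ t : ℝ) = t.toReal)
    (hφ2 : ∀ t : ℝ≥0∞, 1 < t → φ t = 1) : DistDistr φ := by
  have hmono : Monotone φ := by
    intro s t hst
    rcases le_or_gt t 1 with ht | ht
    · rw [← Subtype.coe_le_coe, hφ1 s (hst.trans ht), hφ1 t ht]
      exact ENNReal.toReal_mono (ht.trans_lt ENNReal.one_lt_top).ne hst
    · exact (hφ2 t ht).symm ▸ le_one'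
  refine distDistr_of_monotone hmono fun t c hc => ?_
  rcases le_or_gt t 1 with ht | ht
  · have ht' : t ≠ ⊤ := (ht.trans_lt ENNReal.one_lt_top).ne
    rw [← Subtype.coe_lt_coe, hφ1 t ht] at hc
    obtain ⟨m, hcm, hmt⟩ := exists_between hc
    have hm : 0 ≤ m := c.2.1.trans hcm.le
    have hst : ENNReal.ofReal m < t := (ENNReal.ofReal_lt_iff_lt_toReal hm ht').2 hmt
    refine ⟨ENNReal.ofReal m, hst, ?_⟩
    rwa [← Subtype.coe_lt_coe, hφ1 _ (hst.le.trans ht), ENNReal.toReal_ofReal hm]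
  · exact exists_lt_of_eq_one_of_one_lt hφ2 ht hc

lemma distDistr_step (hξ1 : ∀ t : ℝ≥0∞, t ≤ 1 → ξ t = 0)
    (hξ2 : ∀ t : ℝ≥0∞, 1 < t → ξ t = 1) : DistDistr ξ := by
  have hmono : Monotone ξ := by
    intro s t hst
    rcases le_or_gt t 1 with ht | ht
    · rw [hξ1 s (hst.trans ht), hξ1 t ht]
    · exact (hξ2 t ht).symm ▸ le_one'
  refine distDistr_of_monotone hmono fun t c hc => ?_
  rcases le_or_gt t 1 with ht | ht
  · exact absurd (hξ1 t ht ▸ hc) (not_lt_of_ge nonneg')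
  · exact exists_lt_of_eq_one_of_one_lt hξ2 ht hc

lemma step_le_ramp (hφ2 : ∀ t : ℝ≥0∞, 1 < t → φ t = 1)
    (hξ1 : ∀ t : ℝ≥0∞, t ≤ 1 → ξ t = 0) (hξ2 : ∀ t : ℝ≥0∞, 1 < t → ξ t = 1) (t : ℝ≥0∞) :
    ξ t ≤ φ t := by
  rcases le_or_gt t 1 with ht | ht
  · exact (hξ1 t ht).symm ▸ nonneg'
  · rw [hξ2 t ht, hφ2 t ht]

lemma not_exists_conv_ramp_eq_step (T : ContinuousTNorm)
    (hφ1 : ∀ t : ℝ≥0∞, t ≤ 1 → (φ t : ℝ) = t.toReal)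
    (hξ1 : ∀ t : ℝ≥0∞, t ≤ 1 → ξ t = 0) (hξ2 : ∀ t : ℝ≥0∞, 1 < t → ξ t = 1) :
    ¬ ∃ ψ : ℝ≥0∞ → I, DistDistr ψ ∧ conv T φ ψ = ξ := by
  rintro ⟨ψ, hψ, hconv⟩
  have h34 : (3/4 : ℝ≥0∞) ≠ ⊤ := by finiteness
  have h12 : (1/2 : ℝ≥0∞) ≤ 1 := by
    rw [← ENNReal.toReal_le_toReal (by finiteness) (by finiteness)]; norm_num
  have hψ_half : ψ (1/2) = 1 := by
    refine le_antisymm le_one' (le_of_forall_lt fun c hc => ?_)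
    let c₀ : I := ⟨3/4, by norm_num, by norm_num⟩
    have hconv : c ⊔ c₀ < conv T φ ψ (5/4) := by
      rw [hconv, hξ2 _ (by rw [← ENNReal.toReal_lt_toReal (by finiteness) (by finiteness)]; norm_num)]
      exact sup_lt_iff.2 ⟨hc, by rw [← Subtype.coe_lt_coe]; norm_num [c₀]⟩
    obtain ⟨r, s, hrs, hφr, hψs⟩ := exists_lt_of_lt_conv hconv
    have hr : 3/4 < r := by
      by_contra! hr
      have hφr' : c₀ < φ r := le_sup_right.trans_lt hφr
      rw [← Subtype.coe_lt_coe, hφ1 r (hr.trans (by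
        rw [← ENNReal.toReal_le_toReal h34 (by finiteness)]; norm_num))] at hφr'
      have := ENNReal.toReal_mono h34 hr
      norm_num [c₀] at hφr' this
      linarith
    have hs : s < 1/2 := by
      by_contra! hs
      have h : (3/4 : ℝ≥0∞) + 1/2 = 5/4 := by
        rw [← ENNReal.toReal_eq_toReal_iff' (by finiteness) (by finiteness),
          ENNReal.toReal_add h34 (by finiteness)]
        norm_num
      exact (h ▸ hrs ▸ ENNReal.add_lt_add_of_lt_of_le (by finiteness) hr hs).false
    exact (le_sup_left.trans_lt hψs).trans_le (hψ.monotone hs.le)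
  have h := mul_le_conv T φ ψ (1/2) (1/2)
  rw [hψ_half, T.mul_one, ENNReal.add_halves, hconv, hξ1 1 le_rfl, ← Subtype.coe_le_coe,
    hφ1 _ h12] at h
  norm_num at h

end RampAndStep

/-- with `φ t = t` for `t ≤ 1` and `φ t = 1` for `t > 1`, and
`ξ t = 0` for `t ≤ 1`, `ξ t = 1` for `t > 1`: both are distance distributions,
`ξ ≤ φ`, but no distance distribution `ψ` satisfies `φ ⊗ ψ = ξ`.
In particular `(Δ, ⊗, κ_{0,1})` is not divisible. -/
theorem stmt_6 (T : ContinuousTNorm) (φ ξ : ℝ≥0∞ → I)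
    (hφ1 : ∀ t : ℝ≥0∞, t ≤ 1 → (φ t : ℝ) = t.toReal)
    (hφ2 : ∀ t : ℝ≥0∞, 1 < t → φ t = 1)
    (hξ1 : ∀ t : ℝ≥0∞, t ≤ 1 → ξ t = 0)
    (hξ2 : ∀ t : ℝ≥0∞, 1 < t → ξ t = 1) :
    DistDistr φ ∧ DistDistr ξ ∧ (∀ t, ξ t ≤ φ t) ∧
      ¬ ∃ ψ : ℝ≥0∞ → I, DistDistr ψ ∧ conv T φ ψ = ξ :=
  ⟨distDistr_ramp hφ1 hφ2, distDistr_step hξ1 hξ2, step_le_ramp hφ2 hξ1 hξ2,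
    not_exists_conv_ramp_eq_step T hφ1 hξ1 hξ2⟩
end
end

section
/- Let * be a continuous t-norm. For all p, q ∈ [0,∞) and a, b ∈ [0,1], the convolution of one-step functions satisfies κ_{p,a} ⊗ κ_{q,b} = κ_{p+q, a*b}. -/
open unitInterval
open scoped ENNReal

noncomputable section

lemma Tmul_zero_left (T : ContinuousTNorm) (a : I) : T.mul 0 a = 0 := by
  apply le_antisymm _ unitInterval.nonneg'
  calc T.mul 0 a ≤ T.mul 0 1 := T.mono 0 unitInterval.le_one'
    _ = 0 := T.mul_one 0

lemma Tmul_zero_right (T : ContinuousTNorm) (a : I) : T.mul a 0 = 0 := by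
  rw [T.comm]; exact Tmul_zero_left T a

lemma Tmul_le_mul (T : ContinuousTNorm) {a b c d : I} (h1 : a ≤ c) (h2 : b ≤ d) :
    T.mul a b ≤ T.mul c d := by
  calc T.mul a b ≤ T.mul a d := T.mono a h2
    _ = T.mul d a := T.comm a d
    _ ≤ T.mul d c := T.mono d h1
    _ = T.mul c d := T.comm d c

/-- `κ_{p,a} ⊗ κ_{q,b} = κ_{p+q, a*b}` for `p, q ∈ [0,∞)`. -/
theorem stmt_7 (T : ContinuousTNorm) (p q : ℝ≥0∞) (hp : p ≠ ∞) (hq : q ≠ ∞) (a b : I) :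
    conv T (kappa p a) (kappa q b) = kappa (p + q) (T.mul a b) := by
  funext t
  unfold conv kappa
  by_cases h : t ≤ p + q
  · rw [if_pos h]
    apply le_antisymm _ unitInterval.nonneg'
    apply iSup_le; intro r; apply iSup_le; intro s; apply iSup_le; intro hrs
    by_cases hr : r ≤ p
    · rw [if_pos hr, Tmul_zero_left]
    · have hs : s ≤ q := by
        by_contra hs
        have : p + q < r + s := ENNReal.add_lt_add (lt_of_not_ge hr) (lt_of_not_ge hs)
        rw [hrs] at this
        exact absurd h (not_le.mpr this)
      rw [if_pos hs, Tmul_zero_right]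
  · rw [if_neg h]
    push_neg at h
    apply le_antisymm
    · apply iSup_le; intro r; apply iSup_le; intro s; apply iSup_le; intro _
      apply Tmul_le_mul
      · split
        · exact unitInterval.nonneg'
        · exact le_rfl
      · split
        · exact unitInterval.nonneg'
        · exact le_rfl
    · set d := t - (p + q) with hd_def
      have hd : d ≠ 0 := (tsub_pos_of_lt h).ne'
      have hhalf : d / 2 ≠ 0 := (ENNReal.half_pos hd).ne'
      have hr : p < p + d / 2 := ENNReal.lt_add_right hp hhalf
      have hs : q < q + d / 2 := ENNReal.lt_add_right hq hhalf
      have hrs : (p + d / 2) + (q + d / 2) = t := by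
        rw [add_add_add_comm, ENNReal.add_halves, add_tsub_cancel_of_le h.le]
      refine le_trans ?_ (le_iSup_of_le (p + d / 2) (le_iSup_of_le (q + d / 2)
        (le_iSup_of_le hrs le_rfl)))
      rw [if_neg (not_le.mpr hr), if_neg (not_le.mpr hs)]
end
end

section
/- Let φ, ξ be distance distributions and let ⊗_∧ denote convolution with respect to the minimum t-norm, (φ ⊗_∧ ψ)(t) = sup_{r+s=t} min(φ(r), ψ(s)). Then there exists a distance distribution ψ with φ ⊗_∧ ψ = ξ if and only if there exists a distance distribution ψ with ξ♭ = φ♭ + ψ♭ (pointwise on [0,1]). -/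
/-!
`φ♭` is the upper adjoint of `φ`: `φ p ≤ a ↔ p ≤ φ♭ a`. Unfolding the min-convolution,
`(φ ⊗_∧ ψ)(t) ≤ a` says that every splitting `t = r + s` has `r ≤ φ♭ a` or `s ≤ ψ♭ a`, which
happens exactly when `t ≤ φ♭ a + ψ♭ a`; hence `(φ ⊗_∧ ψ)♭ = φ♭ + ψ♭`. Since `φ ⊗_∧ ψ` is again a
distance distribution and a lower adjoint is determined by its upper adjoint, both conditions
say the same thing about `ψ`.
-/

open unitInterval
open scoped ENNReal

noncomputable section

/-- Convolution w.r.t. the minimum t-norm. -/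
def convMin (φ ψ : ℝ≥0∞ → I) : ℝ≥0∞ → I :=
  fun t => ⨆ (r : ℝ≥0∞) (s : ℝ≥0∞) (_ : r + s = t), φ r ⊓ ψ s

/-- The right adjoint `φ♭` of a distance distribution `φ`. -/
def flat (φ : ℝ≥0∞ → I) : I → ℝ≥0∞ :=
  fun a => sSup {p : ℝ≥0∞ | φ p ≤ a}

namespace DistDistr

variable {φ ψ : ℝ≥0∞ → I}

lemma monotone_s16 (h : DistDistr φ) : Monotone φ := by
  intro s t hst
  rcases hst.eq_or_lt with rfl | hlt
  · exact le_rfl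
  · rw [h t]
    exact le_iSup₂_of_le s hlt le_rfl

lemma gc (h : DistDistr φ) : GaloisConnection φ (flat φ) := by
  intro p a
  refine ⟨fun hp => le_sSup hp, fun hp => ?_⟩
  rw [h p]
  refine iSup₂_le fun s hs => ?_
  obtain ⟨q, hq, hsq⟩ := lt_sSup_iff.mp (hs.trans_le hp)
  exact (h.monotone_s16 hsq.le).trans hq

lemma eq_of_flat_eq (hφ : DistDistr φ) (hψ : DistDistr ψ) (h : flat φ = flat ψ) : φ = ψ :=
  funext fun _ => hφ.gc.l_unique hψ.gc (congrFun h)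

end DistDistr

section convMin

variable {φ ψ : ℝ≥0∞ → I}

lemma convMin_le_iff {t : ℝ≥0∞} {a : I} :
    convMin φ ψ t ≤ a ↔ ∀ r s, r + s = t → φ r ⊓ ψ s ≤ a := by
  simp only [convMin, iSup_le_iff]

lemma inf_le_convMin (r s : ℝ≥0∞) : φ r ⊓ ψ s ≤ convMin φ ψ (r + s) :=
  le_iSup₂_of_le r s (le_iSup_of_le rfl le_rfl)

lemma monotone_convMin (hψ : Monotone ψ) : Monotone (convMin φ ψ) := by
  intro u t hut
  refine convMin_le_iff.mpr fun r s hrs => ?_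
  have hsplit : r + (s + (t - u)) = t := by rw [← add_assoc, hrs, add_tsub_cancel_of_le hut]
  calc φ r ⊓ ψ s ≤ φ r ⊓ ψ (s + (t - u)) := inf_le_inf_left _ (hψ le_self_add)
    _ ≤ convMin φ ψ t := (inf_le_convMin r _).trans_eq (congrArg _ hsplit)

lemma DistDistr.convMin (hφ : DistDistr φ) (hψ : DistDistr ψ) : DistDistr (convMin φ ψ) := by
  intro t
  refine le_antisymm (convMin_le_iff.mpr fun r s hrs => le_of_forall_lt fun c hc => ?_)
    (iSup₂_le fun u hu => monotone_convMin hψ.monotone_s16 hu.le)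
  have hcφ : c < φ r := hc.trans_le inf_le_left
  have hcψ : c < ψ s := hc.trans_le inf_le_right
  rw [hφ r] at hcφ
  rw [hψ s] at hcψ
  simp only [lt_iSup_iff] at hcφ hcψ
  obtain ⟨r', hr', hcr⟩ := hcφ
  obtain ⟨s', hs', hcs⟩ := hcψ
  have hlt : r' + s' < t := hrs ▸ ENNReal.add_lt_add hr' hs'
  calc c < φ r' ⊓ ψ s' := lt_inf_iff.mpr ⟨hcr, hcs⟩
    _ ≤ _ := inf_le_convMin r' s'
    _ ≤ _ := le_iSup₂_of_le (r' + s') hlt le_rfl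

lemma flat_convMin (hφ : DistDistr φ) (hψ : DistDistr ψ) (a : I) :
    flat (convMin φ ψ) a = flat φ a + flat ψ a := by
  apply le_antisymm
  · refine sSup_le fun t ht => le_of_not_gt fun hlt => ?_
    obtain ⟨r, hφr, hrt⟩ := exists_between (lt_tsub_iff_right.mpr hlt)
    have hψs : flat ψ a < t - r := lt_tsub_comm.mp hrt
    have hsplit : r + (t - r) = t := add_tsub_cancel_of_le (hrt.le.trans tsub_le_self)
    refine (convMin_le_iff.mp ht r (t - r) hsplit).not_gt (lt_inf_iff.mpr ⟨?_, ?_⟩)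
    · exact hφ.gc.lt_iff_lt.mpr hφr
    · exact hψ.gc.lt_iff_lt.mpr hψs
  · refine le_sSup (convMin_le_iff.mpr fun r s hrs => ?_)
    rcases le_or_gt r (flat φ a) with hr | hr
    · exact inf_le_left.trans (hφ.gc.l_le hr)
    · have hs : s ≤ flat ψ a := le_of_not_gt fun hs => (ENNReal.add_lt_add hr hs).ne' hrs
      exact inf_le_right.trans (hψ.gc.l_le hs)

end convMin

/-- `ξ` is a diagonal on `φ` in `Δ_∧` iff `ξ♭ = φ♭ + ψ♭` for some
distance distribution `ψ`. -/
theorem stmt_16 (φ ξ : ℝ≥0∞ → I) (hφ : DistDistr φ) (hξ : DistDistr ξ) :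
    (∃ ψ : ℝ≥0∞ → I, DistDistr ψ ∧ convMin φ ψ = ξ) ↔
      ∃ ψ : ℝ≥0∞ → I, DistDistr ψ ∧ ∀ a : I, flat ξ a = flat φ a + flat ψ a := by
  constructor
  · rintro ⟨ψ, hψ, rfl⟩
    exact ⟨ψ, hψ, flat_convMin hφ hψ⟩
  · rintro ⟨ψ, hψ, hflat⟩
    refine ⟨ψ, hψ, (hφ.convMin hψ).eq_of_flat_eq hξ (funext fun a => ?_)⟩
    rw [flat_convMin hφ hψ, hflat]
end
end
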